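/- Let u : ℝ³ → ℝ be a C³ solution of u_yy = u_tx + u_y·u_xx − u_x·u_xy. Then the function v(t,x,y) := 2x − y·u_x(t,x,y) satisfies the linearized equation v_yy = v_tx + u_y·v_xx + u_xx·v_y − u_x·v_xy − u_xy·v_x at every point of ℝ³. -/

import Mathlib

/-! The symmetry θ₁ = 2x − y·u_x is built from two pieces on which the linearized operator ℓ_u is
easy to evaluate. The generator u_x of x-translations satisfies ℓ_u(u_x) = ∂ₓ(u_yy − u_tx − u_y u_xx
+ u_x u_xy) = 0. Multiplication by y commutes with ℓ_u up to the first-order term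
2w_y − u_xx w + u_x w_x, which for w = u_x is 2u_xy = ℓ_u(2x). -/

/-- Partial derivative of `f : ℝ³ → ℝ` in the direction `v`. -/
noncomputable def pd3 (v : ℝ × ℝ × ℝ) (f : ℝ × ℝ × ℝ → ℝ) : ℝ × ℝ × ℝ → ℝ :=
  fun p => fderiv ℝ f p v

noncomputable def dt : (ℝ × ℝ × ℝ → ℝ) → ℝ × ℝ × ℝ → ℝ := pd3 (1, 0, 0)
noncomputable def dx : (ℝ × ℝ × ℝ → ℝ) → ℝ × ℝ × ℝ → ℝ := pd3 (0, 1, 0)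
noncomputable def dy : (ℝ × ℝ × ℝ → ℝ) → ℝ × ℝ × ℝ → ℝ := pd3 (0, 0, 1)

section DirectionalDerivative

variable (e : ℝ × ℝ × ℝ) {f g : ℝ × ℝ × ℝ → ℝ}

lemma contDiff_pd3 {m n : WithTop ℕ∞} (hmn : m + 1 ≤ n) (hf : ContDiff ℝ n f) :
    ContDiff ℝ m (pd3 e f) :=
  (hf.fderiv_right hmn).clm_apply contDiff_const

lemma ContDiff.differentiable_pd3 {n : WithTop ℕ∞} (hf : ContDiff ℝ n f) (hn : 2 ≤ n) :
    Differentiable ℝ (pd3 e f) :=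
  (contDiff_pd3 e (m := 1) hn hf).differentiable one_ne_zero

lemma pd3_fun_add (hf : Differentiable ℝ f) (hg : Differentiable ℝ g) :
    pd3 e (fun q => f q + g q) = fun q => pd3 e f q + pd3 e g q := by
  ext q; simp [pd3, fderiv_fun_add (hf q) (hg q)]

lemma pd3_fun_sub (hf : Differentiable ℝ f) (hg : Differentiable ℝ g) :
    pd3 e (fun q => f q - g q) = fun q => pd3 e f q - pd3 e g q := by
  ext q; simp [pd3, fderiv_fun_sub (hf q) (hg q)]

lemma pd3_fun_mul (hf : Differentiable ℝ f) (hg : Differentiable ℝ g) :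
    pd3 e (fun q => f q * g q) = fun q => pd3 e f q * g q + f q * pd3 e g q := by
  ext q; simp [pd3, fderiv_fun_mul (hf q) (hg q)]; ring

lemma pd3_const_mul (c : ℝ) (hf : Differentiable ℝ f) :
    pd3 e (fun q => c * f q) = fun q => c * pd3 e f q := by
  ext q; simp [pd3, fderiv_const_mul (hf q)]

lemma pd3_const (c : ℝ) : pd3 e (fun _ => c) = fun _ => 0 := by
  ext q; simp [pd3]

lemma pd3_x : pd3 e (fun q => q.2.1) = fun _ => e.2.1 := by
  ext q; simp [pd3, (hasFDerivAt_snd (𝕜 := ℝ) (p := q)).fst.fderiv]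

lemma pd3_y : pd3 e (fun q => q.2.2) = fun _ => e.2.2 := by
  ext q; simp [pd3, (hasFDerivAt_snd (𝕜 := ℝ) (p := q)).snd.fderiv]

lemma pd3_y_mul (hf : Differentiable ℝ f) :
    pd3 e (fun q => q.2.2 * f q) = fun q => e.2.2 * f q + q.2.2 * pd3 e f q := by
  rw [pd3_fun_mul e (by fun_prop) hf, pd3_y]

lemma pd3_comm (e' : ℝ × ℝ × ℝ) (hf : ContDiff ℝ 2 f) :
    pd3 e (pd3 e' f) = pd3 e' (pd3 e f) := by
  ext q
  have hdiff : DifferentiableAt ℝ (fderiv ℝ f) q :=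
    ((hf.fderiv_right (m := 1) le_rfl).differentiable one_ne_zero).differentiableAt
  have key (a b : ℝ × ℝ × ℝ) : pd3 a (pd3 b f) q = fderiv ℝ (fderiv ℝ f) q a b := by
    change fderiv ℝ (fun p => fderiv ℝ f p b) q a = _
    simp [fderiv_clm_apply hdiff (differentiableAt_const b)]
  rw [key, key]
  exact hf.contDiffAt.isSymmSndFDerivAt (by simp) e e'

end DirectionalDerivative

noncomputable def mikhalevResidual (u : ℝ × ℝ × ℝ → ℝ) (p : ℝ × ℝ × ℝ) : ℝ :=
  dy (dy u) p - (dt (dx u) p + dy u p * dx (dx u) p - dx u p * dx (dy u) p)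

noncomputable def mikhalevLinearized (u v : ℝ × ℝ × ℝ → ℝ) (p : ℝ × ℝ × ℝ) : ℝ :=
  dy (dy v) p - (dt (dx v) p + dy u p * dx (dx v) p + dx (dx u) p * dy v p
    - dx u p * dx (dy v) p - dx (dy u) p * dx v p)

section Linearized

variable {u v w : ℝ × ℝ × ℝ → ℝ}

lemma mikhalevLinearized_sub (hv : ContDiff ℝ 2 v) (hw : ContDiff ℝ 2 w) :
    mikhalevLinearized u (fun q => v q - w q)
      = fun q => mikhalevLinearized u v q - mikhalevLinearized u w q := by
  have hv1 := hv.differentiable two_ne_zero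
  have hw1 := hw.differentiable two_ne_zero
  ext q
  simp only [mikhalevLinearized, dt, dx, dy, pd3_fun_sub _ hv1 hw1,
    pd3_fun_sub _ (hv.differentiable_pd3 _ le_rfl) (hw.differentiable_pd3 _ le_rfl)]
  ring

lemma mikhalevLinearized_two_mul_x :
    mikhalevLinearized u (fun q => 2 * q.2.1) = fun q => 2 * dx (dy u) q := by
  have hx : Differentiable ℝ fun q : ℝ × ℝ × ℝ => q.2.1 := by fun_prop
  ext q
  simp only [mikhalevLinearized, dt, dx, dy, pd3_const_mul _ 2 hx, pd3_x, pd3_const]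
  ring

lemma mikhalevLinearized_y_mul (hw : ContDiff ℝ 2 w) :
    mikhalevLinearized u (fun q => q.2.2 * w q) = fun q => q.2.2 * mikhalevLinearized u w q
      + 2 * dy w q - dx (dx u) q * w q + dx u q * dx w q := by
  have hw1 := hw.differentiable two_ne_zero
  have hw2 (e : ℝ × ℝ × ℝ) := hw.differentiable_pd3 e le_rfl
  have second (e e' : ℝ × ℝ × ℝ) : pd3 e' (pd3 e fun q => q.2.2 * w q)
      = fun q => e.2.2 * pd3 e' w q + (e'.2.2 * pd3 e w q + q.2.2 * pd3 e' (pd3 e w) q) := by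
    rw [pd3_y_mul e hw1, pd3_fun_add e' (by fun_prop) (by fun_prop), pd3_const_mul e' _ hw1,
      pd3_y_mul e' (hw2 e)]
  ext q
  simp only [mikhalevLinearized, dt, dx, dy, second]
  simp only [pd3_y_mul _ hw1]
  ring

lemma mikhalevLinearized_dx (hu : ContDiff ℝ 3 u) :
    mikhalevLinearized u (dx u) = dx (mikhalevResidual u) := by
  have hu2 : ContDiff ℝ 2 u := hu.of_le (by norm_num)
  have hu' (e : ℝ × ℝ × ℝ) : ContDiff ℝ 2 (pd3 e u) := contDiff_pd3 e (by norm_num) hu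
  have hd1 (e : ℝ × ℝ × ℝ) : Differentiable ℝ (pd3 e u) := hu2.differentiable_pd3 e le_rfl
  have hd2 (e e' : ℝ × ℝ × ℝ) : Differentiable ℝ (pd3 e (pd3 e' u)) :=
    (hu' e').differentiable_pd3 e le_rfl
  have hxy : dy (dx u) = dx (dy u) := pd3_comm _ _ hu2
  have hxyy : dy (dx (dy u)) = dx (dy (dy u)) := pd3_comm _ _ (hu' _)
  have htxx : dt (dx (dx u)) = dx (dt (dx u)) := pd3_comm _ _ (hu' _)
  ext q
  simp only [mikhalevLinearized]
  rw [hxy, hxyy, htxx]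
  unfold mikhalevResidual
  simp only [dt, dx, dy]
  simp (disch := fun_prop) only [pd3_fun_sub, pd3_fun_add, pd3_fun_mul]
  ring

end Linearized

theorem theta1_is_symmetry (u : ℝ × ℝ × ℝ → ℝ) (hu : ContDiff ℝ 3 u)
    (heq : ∀ p : ℝ × ℝ × ℝ,
      dy (dy u) p = dt (dx u) p + dy u p * dx (dx u) p - dx u p * dx (dy u) p) :
    ∀ p : ℝ × ℝ × ℝ,
      (fun v : ℝ × ℝ × ℝ → ℝ =>
        dy (dy v) p = dt (dx v) p + dy u p * dx (dx v) p + dx (dx u) p * dy v p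
          - dx u p * dx (dy v) p - dx (dy u) p * dx v p)
      (fun q => 2 * q.2.1 - q.2.2 * dx u q) := by
  have hres : mikhalevResidual u = fun _ => 0 := funext fun p => sub_eq_zero.mpr (heq p)
  have hdres : dx (mikhalevResidual u) = fun _ => 0 := by rw [hres]; exact pd3_const _ 0
  have hux : ContDiff ℝ 2 (dx u) := contDiff_pd3 _ (by norm_num) hu
  have hcomm : dy (dx u) = dx (dy u) := pd3_comm _ _ (hu.of_le (by norm_num))
  have hlin : mikhalevLinearized u (fun q => 2 * q.2.1 - q.2.2 * dx u q) = fun _ => 0 := by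
    rw [mikhalevLinearized_sub (by fun_prop) (by fun_prop), mikhalevLinearized_two_mul_x,
      mikhalevLinearized_y_mul hux, mikhalevLinearized_dx hu, hdres, hcomm]
    ext q; ring
  exact fun p => sub_eq_zero.mp (congrFun hlin p)
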